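/- Let $a\in(-1,1)$ and let $\widetilde u(x,y,t)$ be the degenerate heat kernel defined via the series in terms of $\nu=(a-1)/2$. Then $\widetilde u(x,y,t)\ge 0$ for all $x,y\in\mathbb{R}$ and $t>0$. -/

import Mathlib

noncomputable section
open Real

/-- The Bessel-type profile `F(z)` with `ν = (a-1)/2`:
`F(z) = e^{-z/2} ( ∑_k (z/4)^{2k}/(k! Γ(k+ν+1)) + (z/4)|z/4|^{-a} ∑_k (z/4)^{2k}/(k! Γ(k-ν+1)) )`. -/
def Fker (a z : ℝ) : ℝ :=
  Real.exp (-z / 2) *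
    ((∑' k : ℕ, (z / 4) ^ (2 * k) / ((Nat.factorial k : ℝ) * Real.Gamma ((k : ℝ) + (a - 1) / 2 + 1))) +
      z / 4 * |z / 4| ^ (-a) *
        ∑' k : ℕ, (z / 4) ^ (2 * k) / ((Nat.factorial k : ℝ) * Real.Gamma ((k : ℝ) - (a - 1) / 2 + 1)))

/-- The one-dimensional degenerate heat kernel
`ũ(x,y,t) = (4t)^{-(a+1)/2} e^{-(x-y)²/(4t)} F(xy/t)`. -/
def utilde (a x y t : ℝ) : ℝ :=
  (4 * t) ^ (-(a + 1) / 2) * Real.exp (-(x - y) ^ 2 / (4 * t)) * Fker a (x * y / t)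

/-! Write `S_ν(c) = ∑ₖ c^{2k} / (k! Γ(k + ν + 1)) = c^{-ν} I_ν(2c)` and
`ν = (a - 1)/2 ∈ (-1, 0)`. For `z ≥ 0` both summands of `F(z)` are nonnegative; for
`z = -4c < 0` the claim becomes `c^{-2ν} S_{-ν}(c) ≤ S_ν(c)`, i.e. `I_{-ν}(2c) ≤ I_ν(2c)`.

Since `S_ν' = 2c S_{ν+1}` and `c² S_{ν+2} = S_ν - (ν + 1) S_{ν+1}`, the functions
`c^{±ν} S_{±ν}` solve the same second order equation, and `c` times their Wronskian is
constant, equal to its value `-2ν / (Γ(1 - ν) Γ(1 + ν)) > 0` at `c = 0`. Hence the ratio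
`c^{-2ν} S_{-ν}(c) / S_ν(c)` is increasing, and it suffices to bound it by `1 + C/c`.
By log-convexity of `Γ`, the `k`-th term of `c^{-2ν} S_{-ν}` is at most `1 + O(1/k)` times a
convex combination of the `k`-th and `(k+1)`-st terms of `S_ν`, and the terms of `S_ν(c)`
weighted by `1/(k+1)` sum to `O(S_ν(c)/c)`.
-/

open Filter Topology Set

lemma Gamma_add_le_mul_rpow {y s : ℝ} (hy : 0 < y) (hs₀ : 0 < s) (hs₁ : s < 1) :
    Gamma (y + s) ≤ Gamma y * y ^ s := by
  have h := Gamma_mul_add_mul_le_rpow_Gamma_mul_rpow_Gamma hy (by linarith : 0 < y + 1)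
    (by linarith : 0 < 1 - s) hs₀ (by ring)
  have hΓ := Gamma_pos_of_pos hy
  rw [show (1 - s) * y + s * (y + 1) = y + s by ring, Gamma_add_one hy.ne',
    mul_rpow hy.le hΓ.le] at h
  exact h.trans_eq (by rw [mul_left_comm, ← rpow_add hΓ, sub_add_cancel, rpow_one, mul_comm])

lemma Gamma_sub_mul_rpow_le {x s m : ℝ} (hx : 1 ≤ x) (hm : 0 < m) (hms : m ≤ s)
    (hms' : m ≤ 1 - s) :
    Gamma (x - s) * (x * (x - s)) ^ s ≤ (1 + 1 / (m * x)) * Gamma (x + s) := by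
  have hp : 0 < x - s := by linarith
  have hq : 0 < x + s - 1 := by linarith
  have hy : 0 < x - 1 + m := by linarith
  have hp' : x - 1 + m ≤ x - s := by linarith
  have hq' : x - 1 + m ≤ x + s - 1 := by linarith
  have h₁ : Gamma (x - s + 1) ≤ Gamma x * x ^ (1 - s) := by
    simpa [show x - s + 1 = x + (1 - s) by ring] using
      Gamma_add_le_mul_rpow (by linarith : 0 < x) (by linarith : 0 < 1 - s) (by linarith)
  have h₂ : Gamma x ≤ Gamma (x + s - 1) * (x + s - 1) ^ (1 - s) := by
    simpa [show x + s - 1 + (1 - s) = x by ring] using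
      Gamma_add_le_mul_rpow (by linarith : 0 < x + s - 1) (by linarith : 0 < 1 - s) (by linarith)
  calc Gamma (x - s) * (x * (x - s)) ^ s
      = Gamma (x - s + 1) * x ^ s * (x - s) ^ (s - 1) := by
        rw [Gamma_add_one hp.ne', mul_rpow (by linarith) hp.le, rpow_sub_one hp.ne']
        field_simp
    _ ≤ Gamma x * x ^ (1 - s) * x ^ s * (x - s) ^ (s - 1) := by gcongr
    _ = Gamma x * x * (x - s) ^ (s - 1) := by
        rw [mul_assoc (Gamma x), ← rpow_add (by linarith), sub_add_cancel, rpow_one]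
    _ ≤ Gamma (x + s - 1) * (x + s - 1) ^ (1 - s) * x * (x - s) ^ (s - 1) := by gcongr
    _ = Gamma (x + s) * x * ((x - s) ^ (s - 1) * (x + s - 1) ^ (-s)) := by
        rw [show x + s = x + s - 1 + 1 by ring, Gamma_add_one hq.ne', add_sub_cancel_right,
          sub_eq_add_neg 1 s, rpow_add hq, rpow_one]
        ring
    _ ≤ Gamma (x + s) * x * ((x - 1 + m) ^ (s - 1) * (x - 1 + m) ^ (-s)) := by
        refine mul_le_mul_of_nonneg_left (mul_le_mul (rpow_le_rpow_of_nonpos hy hp' (by linarith))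
          (rpow_le_rpow_of_nonpos hy hq' (by linarith)) (by positivity) (by positivity))
          (mul_pos (Gamma_pos_of_pos (by linarith)) (by linarith)).le
    _ = x / (x - 1 + m) * Gamma (x + s) := by
        rw [← rpow_add hy, show s - 1 + -s = -1 by ring, rpow_neg_one]
        ring
    _ ≤ (1 + 1 / (m * x)) * Gamma (x + s) := by
        refine mul_le_mul_of_nonneg_right ?_ (Gamma_pos_of_pos (by linarith)).le
        rw [div_le_iff₀ hy]
        field_simp
        nlinarith [mul_nonneg (sub_nonneg.2 hx) (by nlinarith : (0 : ℝ) ≤ 1 - m + m ^ 2)]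

lemma tsum_nat_add_le_tsum {f : ℕ → ℝ} (hf : Summable f) (h₀ : ∀ k, 0 ≤ f k) (j : ℕ) :
    ∑' k, f (k + j) ≤ ∑' k, f k :=
  tsum_comp_le_tsum_of_inj hf h₀ (add_left_injective j)

def besselTerm (ν c : ℝ) (k : ℕ) : ℝ :=
  c ^ (2 * k) / (k.factorial * Gamma (k + ν + 1))

/-- `besselSeries ν c = c ^ (-ν) * I_ν (2 * c)`, where `I_ν` is the modified Bessel function. -/
def besselSeries (ν c : ℝ) : ℝ :=
  ∑' k, besselTerm ν c k

section BesselSeries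

variable {ν : ℝ}

lemma Gamma_natCast_add_pos (hν : -1 < ν) (k : ℕ) : 0 < Gamma (k + ν + 1) :=
  Gamma_pos_of_pos (by linarith [k.cast_nonneg (α := ℝ)])

lemma besselTerm_nonneg (hν : -1 < ν) (c : ℝ) (k : ℕ) : 0 ≤ besselTerm ν c k := by
  have := Gamma_natCast_add_pos hν k
  rw [besselTerm, pow_mul]
  positivity

lemma besselTerm_neg (c : ℝ) (k : ℕ) : besselTerm ν (-c) k = besselTerm ν c k := by
  rw [besselTerm, besselTerm, (even_two_mul k).neg_pow]

lemma besselTerm_le_of_abs_le (hν : -1 < ν) {c d : ℝ} (h : |c| ≤ d) (k : ℕ) :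
    besselTerm ν c k ≤ besselTerm ν d k := by
  have := Gamma_natCast_add_pos hν k
  rw [besselTerm, besselTerm, ← (even_two_mul k).pow_abs]
  gcongr

lemma besselTerm_succ_mul (hν : -1 < ν) (c : ℝ) (k : ℕ) :
    besselTerm ν c (k + 1) * ((k + 1) * (k + ν + 1)) = besselTerm ν c k * c ^ 2 := by
  have hk : (k : ℝ) + ν + 1 ≠ 0 := by linarith [k.cast_nonneg (α := ℝ)]
  have hΓ := (Gamma_natCast_add_pos hν k).ne'
  rw [besselTerm, besselTerm, Nat.cast_succ, add_right_comm (k : ℝ) 1, Gamma_add_one hk,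
    Nat.factorial_succ, Nat.cast_mul, Nat.cast_succ]
  field_simp
  ring

lemma summable_besselTerm (hν : -1 < ν) (c : ℝ) : Summable (besselTerm ν c) := by
  refine summable_of_ratio_norm_eventually_le (r := 1 / 2) (by norm_num) ?_
  filter_upwards [eventually_ge_atTop ⌈2 * c ^ 2⌉₊] with k hk
  have hk' : 2 * c ^ 2 ≤ k := Nat.ceil_le.mp hk
  have hA := besselTerm_nonneg hν c k
  have hA' := besselTerm_nonneg hν c (k + 1)
  have hD : 2 * c ^ 2 ≤ (k + 1) * (k + ν + 1) := by nlinarith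
  have hDpos : 0 < ((k : ℝ) + 1) * (k + ν + 1) := by nlinarith
  rw [norm_of_nonneg hA, norm_of_nonneg hA']
  refine le_of_mul_le_mul_right ?_ hDpos
  rw [besselTerm_succ_mul hν c k]
  nlinarith

lemma besselSeries_neg (c : ℝ) : besselSeries ν (-c) = besselSeries ν c := by
  simp only [besselSeries, besselTerm_neg]

lemma besselSeries_zero : besselSeries ν 0 = (Gamma (ν + 1))⁻¹ := by
  rw [besselSeries, tsum_eq_single 0 fun k hk => by simp [besselTerm, hk]]
  simp [besselTerm]

lemma besselSeries_pos (hν : -1 < ν) (c : ℝ) : 0 < besselSeries ν c := by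
  refine (summable_besselTerm hν c).tsum_pos (besselTerm_nonneg hν c) 0 ?_
  simpa [besselTerm] using Gamma_natCast_add_pos hν 0

lemma besselSeries_eq_add_tsum_succ (hν : -1 < ν) (c : ℝ) :
    besselSeries ν c = (Gamma (ν + 1))⁻¹ + ∑' k, besselTerm ν c (k + 1) := by
  rw [besselSeries, (summable_besselTerm hν c).tsum_eq_zero_add]
  simp [besselTerm]

lemma hasDerivAt_besselTerm_succ (hν : -1 < ν) (c : ℝ) (k : ℕ) :
    HasDerivAt (fun y => besselTerm ν y (k + 1)) (2 * c * besselTerm (ν + 1) c k) c := by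
  have hΓ := (Gamma_natCast_add_pos (by linarith : -1 < ν + 1) k).ne'
  refine ((hasDerivAt_pow (2 * (k + 1)) c).div_const
    (((k + 1).factorial : ℝ) * Gamma ((k + 1 : ℕ) + ν + 1))).congr_deriv ?_
  rw [besselTerm, Nat.factorial_succ, Nat.cast_mul, show 2 * (k + 1) - 1 = 2 * k + 1 by omega]
  push_cast
  rw [show (k : ℝ) + 1 + ν + 1 = k + (ν + 1) + 1 by ring]
  field_simp
  ring

lemma hasDerivAt_besselSeries (hν : -1 < ν) (c : ℝ) :
    HasDerivAt (besselSeries ν) (2 * c * besselSeries (ν + 1) c) c := by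
  have hν' : -1 < ν + 1 := by linarith
  have hR : 0 < |c| + 1 := by positivity
  have hsum := hasDerivAt_tsum_of_isPreconnected ((summable_besselTerm hν' (|c| + 1)).mul_left
      (2 * (|c| + 1))) Metric.isOpen_ball (convex_ball (0 : ℝ) (|c| + 1)).isPreconnected
    (fun k y _ => hasDerivAt_besselTerm_succ hν y k) (fun k y hy => ?_)
    (Metric.mem_ball_self hR) ((summable_nat_add_iff 1).2 (summable_besselTerm hν 0))
    (by simp : c ∈ Metric.ball 0 (|c| + 1))
  · rw [tsum_mul_left] at hsum
    rw [funext (besselSeries_eq_add_tsum_succ hν)]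
    exact hsum.const_add _
  · have hy' : |y| ≤ |c| + 1 := by simpa using (Metric.mem_ball.mp hy).le
    rw [norm_mul, norm_mul, norm_of_nonneg (besselTerm_nonneg hν' y k), Real.norm_two,
      Real.norm_eq_abs, mul_assoc, mul_assoc]
    exact mul_le_mul_of_nonneg_left (mul_le_mul hy' (besselTerm_le_of_abs_le hν' hy' k)
      (besselTerm_nonneg hν' y k) hR.le) zero_le_two

end BesselSeries

section Wronskian

variable {ν : ℝ}

lemma besselTerm_succ_sub (hν : -1 < ν) (c : ℝ) (k : ℕ) :
    besselTerm ν c (k + 1) - (ν + 1) * besselTerm (ν + 1) c (k + 1) =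
      c ^ 2 * besselTerm (ν + 1 + 1) c k := by
  have hk : (k : ℝ) + 1 + ν + 1 ≠ 0 := by linarith [k.cast_nonneg (α := ℝ)]
  have hΓ : Gamma ((k : ℝ) + 1 + ν + 1) ≠ 0 := by
    simpa using (Gamma_natCast_add_pos hν (k + 1)).ne'
  rw [besselTerm, besselTerm, besselTerm, Nat.factorial_succ]
  push_cast
  rw [show (k : ℝ) + 1 + (ν + 1) + 1 = k + 1 + ν + 1 + 1 by ring,
    show (k : ℝ) + (ν + 1 + 1) + 1 = k + 1 + ν + 1 + 1 by ring, Gamma_add_one hk]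
  field_simp
  ring

lemma besselSeries_recurrence (hν : -1 < ν) (c : ℝ) :
    c ^ 2 * besselSeries (ν + 1 + 1) c =
      besselSeries ν c - (ν + 1) * besselSeries (ν + 1) c := by
  have hs := summable_besselTerm hν c
  have hs₁ := (summable_besselTerm (by linarith : -1 < ν + 1) c).mul_left (ν + 1)
  have h₀ : besselTerm ν c 0 - (ν + 1) * besselTerm (ν + 1) c 0 = 0 := by
    have hν' : ν + 1 ≠ 0 := (by linarith : 0 < ν + 1).ne'
    have hΓ := (Gamma_pos_of_pos (by linarith : 0 < ν + 1)).ne'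
    simp only [besselTerm, mul_zero, pow_zero, Nat.factorial_zero, Nat.cast_one, one_mul,
      Nat.cast_zero, zero_add, Gamma_add_one hν']
    field_simp
    ring
  rw [besselSeries, besselSeries, besselSeries, ← tsum_mul_left, ← tsum_mul_left,
    ← hs.tsum_sub hs₁, (hs.sub hs₁).tsum_eq_zero_add, h₀, zero_add]
  simp only [besselTerm_succ_sub hν]

/-- `c` times the Wronskian of `c ↦ c ^ ν * besselSeries ν c` and
`c ↦ c ^ (-ν) * besselSeries (-ν) c`. -/
def besselWronskian (ν c : ℝ) : ℝ :=
  -2 * ν * besselSeries (-ν) c * besselSeries ν c +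
    2 * c ^ 2 * (besselSeries (-ν + 1) c * besselSeries ν c -
      besselSeries (ν + 1) c * besselSeries (-ν) c)

lemma hasDerivAt_besselWronskian (hν₁ : -1 < ν) (hν₂ : ν < 1) (c : ℝ) :
    HasDerivAt (besselWronskian ν) 0 c := by
  have hu := hasDerivAt_besselSeries hν₁ c
  have hv := hasDerivAt_besselSeries (by linarith : -1 < -ν) c
  have hu₁ := hasDerivAt_besselSeries (by linarith : -1 < ν + 1) c
  have hv₁ := hasDerivAt_besselSeries (by linarith : -1 < -ν + 1) c
  have ru := besselSeries_recurrence hν₁ c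
  have rv := besselSeries_recurrence (by linarith : -1 < -ν) c
  refine (((hv.const_mul (-2 * ν)).mul hu).add
    (((hasDerivAt_pow 2 c).const_mul 2).mul ((hv₁.mul hu).sub (hu₁.mul hv)))).congr_deriv ?_
  simp only [Pi.mul_apply, Pi.sub_apply]
  linear_combination (4 * c * besselSeries ν c) * rv - (4 * c * besselSeries (-ν) c) * ru

lemma besselWronskian_pos (hν₁ : -1 < ν) (hν₂ : ν < 0) (c : ℝ) :
    0 < besselWronskian ν c := by
  have hW := hasDerivAt_besselWronskian hν₁ (by linarith)
  have h₀ : besselWronskian ν 0 = -2 * ν * (Gamma (-ν + 1))⁻¹ * (Gamma (ν + 1))⁻¹ := by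
    simp [besselWronskian, besselSeries_zero]
  have h₁ := Gamma_pos_of_pos (by linarith : 0 < -ν + 1)
  have h₂ := Gamma_pos_of_pos (by linarith : 0 < ν + 1)
  have h₃ : 0 < -2 * ν := by linarith
  rw [is_const_of_deriv_eq_zero (fun x => (hW x).differentiableAt) (fun x => (hW x).deriv) c 0,
    h₀]
  positivity

lemma monotoneOn_besselRatio (hν₁ : -1 < ν) (hν₂ : ν < 0) :
    MonotoneOn (fun c => c ^ (-2 * ν) * besselSeries (-ν) c / besselSeries ν c) (Ioi 0) := by
  have hderiv : ∀ c ∈ Ioi (0 : ℝ), HasDerivAt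
      (fun c => c ^ (-2 * ν) * besselSeries (-ν) c / besselSeries ν c)
      (c ^ (-2 * ν - 1) * besselWronskian ν c / besselSeries ν c ^ 2) c := by
    intro c (hc : 0 < c)
    refine (((hasDerivAt_rpow_const (p := -2 * ν) (Or.inl hc.ne')).mul
      (hasDerivAt_besselSeries (by linarith) c)).div (hasDerivAt_besselSeries hν₁ c)
      (besselSeries_pos hν₁ c).ne').congr_deriv ?_
    simp only [Pi.mul_apply]
    rw [besselWronskian, show c ^ (-2 * ν) = c ^ (-2 * ν - 1) * c by
      rw [← rpow_add_one hc.ne']; ring_nf]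
    ring
  refine monotoneOn_of_hasDerivWithinAt_nonneg (convex_Ioi 0)
    (fun c hc => (hderiv c hc).continuousAt.continuousWithinAt)
    (fun c hc => (hderiv c (interior_subset hc)).hasDerivWithinAt) fun c hc => ?_
  rw [interior_Ioi] at hc
  have := besselWronskian_pos hν₁ hν₂ c
  have := rpow_pos_of_pos (show (0 : ℝ) < c from hc) (-2 * ν - 1)
  positivity

end Wronskian

section Asymptotics

variable {ν : ℝ}

lemma rpow_mul_besselTerm_neg_le (hν₁ : -1 < ν) (hν₂ : ν < 0) {m c : ℝ} (hm : 0 < m)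
    (hm₁ : m ≤ -ν) (hm₂ : m ≤ 1 + ν) (hc : 0 < c) (k : ℕ) :
    c ^ (-2 * ν) * besselTerm (-ν) c k ≤
      (1 + 1 / (m * (k + 1))) * ((1 + ν) * besselTerm ν c k + -ν * besselTerm ν c (k + 1)) := by
  have hk := k.cast_nonneg (α := ℝ)
  have hx : 0 < ((k : ℝ) + 1) * (k + ν + 1) := by nlinarith
  set A := besselTerm ν c k with hA
  set K := 1 + 1 / (m * (k + 1))
  set q := c ^ 2 / (((k : ℝ) + 1) * (k + ν + 1)) with hq_def
  have hΓ₁ := Gamma_natCast_add_pos hν₁ k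
  have hΓ₂ := Gamma_natCast_add_pos (by linarith : -1 < -ν) k
  have hΓ : Gamma (k + ν + 1) * (((k : ℝ) + 1) * (k + ν + 1)) ^ (-ν) ≤
      K * Gamma (k + -ν + 1) := by
    have h := Gamma_sub_mul_rpow_le (x := k + 1) (by linarith) hm hm₁ (by linarith)
    rwa [show (k : ℝ) + 1 - -ν = k + ν + 1 by ring,
      show (k : ℝ) + 1 + -ν = k + -ν + 1 by ring] at h
  have hq : q ^ (-ν) ≤ (1 + ν) + -ν * q := by
    simpa using geom_mean_le_arith_mean2_weighted (p₁ := 1) (by linarith) (by linarith)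
      zero_le_one (by positivity : 0 ≤ q) (by ring : 1 + ν + -ν = 1)
  have hsucc : besselTerm ν c (k + 1) = A * q := by
    rw [hq_def, mul_div_assoc', eq_div_iff hx.ne']
    exact besselTerm_succ_mul hν₁ c k
  have hpow : c ^ (-2 * ν) = (c ^ 2) ^ (-ν) := by
    rw [← rpow_natCast, ← rpow_mul hc.le]
    ring_nf
  calc c ^ (-2 * ν) * besselTerm (-ν) c k
      = c ^ (2 * k) * c ^ (-2 * ν) / k.factorial / Gamma (k + -ν + 1) := by
        rw [besselTerm]
        ring
    _ ≤ c ^ (2 * k) * c ^ (-2 * ν) / k.factorial * K /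
          (Gamma (k + ν + 1) * (((k : ℝ) + 1) * (k + ν + 1)) ^ (-ν)) := by
        rw [div_le_div_iff₀ hΓ₂ (by positivity), mul_assoc]
        gcongr
    _ = K * (A * q ^ (-ν)) := by
        rw [hq_def, div_rpow (sq_nonneg c) hx.le, ← hpow, hA, besselTerm]
        ring
    _ ≤ K * (A * ((1 + ν) + -ν * q)) := by
        gcongr
        exact besselTerm_nonneg hν₁ c k
    _ = K * ((1 + ν) * A + -ν * besselTerm ν c (k + 1)) := by
        rw [hsucc]
        ring

lemma mul_besselTerm_le (hν₁ : -1 < ν) (hν₂ : ν ≤ 0) {c : ℝ} (hc : 0 < c) (k : ℕ) :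
    c * besselTerm ν c k ≤ (k + 1) * (besselTerm ν c k + besselTerm ν c (k + 1)) := by
  have hA := besselTerm_nonneg hν₁ c k
  have hA' := besselTerm_nonneg hν₁ c (k + 1)
  rcases le_or_gt c (k + 1) with h | h
  · nlinarith
  · have hs := besselTerm_succ_mul hν₁ c k
    have h' : c * (c * besselTerm ν c k) ≤ c * ((k + 1) * besselTerm ν c (k + 1)) := by
      nlinarith [mul_nonneg (by linarith : 0 ≤ c - (k + ν + 1))
        (mul_nonneg (by positivity : (0 : ℝ) ≤ k + 1) hA')]
    nlinarith [le_of_mul_le_mul_left h' hc]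

lemma exists_rpow_mul_besselSeries_neg_le (hν₁ : -1 < ν) (hν₂ : ν < 0) :
    ∃ C, ∀ c > 0, c ^ (-2 * ν) * besselSeries (-ν) c ≤ (1 + C / c) * besselSeries ν c := by
  set m := min (-ν) (1 + ν)
  have hm : 0 < m := lt_min (by linarith) (by linarith)
  refine ⟨6 / m, fun c hc => ?_⟩
  set A := besselTerm ν c
  have hA := summable_besselTerm hν₁ c
  have hA₀ := besselTerm_nonneg hν₁ c
  have hA₁ : Summable fun k => A (k + 1) := (summable_nat_add_iff 1).2 hA
  have hA₂ : Summable fun k => A (k + 2) := (summable_nat_add_iff 2).2 hA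
  set ε := 1 / (m * c) with hε_def
  have hε : 0 < ε := by positivity
  have hterm : ∀ k : ℕ, c ^ (-2 * ν) * besselTerm (-ν) c k ≤
      (1 + ν + ε) * A k + (-ν + 3 * ε) * A (k + 1) + 2 * ε * A (k + 2) := by
    intro k
    have hmain :=
      rpow_mul_besselTerm_neg_le hν₁ hν₂ hm (min_le_left _ _) (min_le_right _ _) hc k
    have hk₀ := mul_besselTerm_le hν₁ hν₂.le hc k
    have hk₁ := mul_besselTerm_le hν₁ hν₂.le hc (k + 1)
    have hmoment : c * (A k + A (k + 1)) ≤ (k + 1) * (A k + 3 * A (k + 1) + 2 * A (k + 2)) := by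
      push_cast at hk₁
      nlinarith [hA₀ (k + 1), hA₀ (k + 2), k.cast_nonneg (α := ℝ)]
    have herr : 1 / (m * (k + 1)) * ((1 + ν) * A k + -ν * A (k + 1)) ≤
        ε * (A k + 3 * A (k + 1) + 2 * A (k + 2)) := by
      calc 1 / (m * (k + 1)) * ((1 + ν) * A k + -ν * A (k + 1))
          ≤ 1 / (m * (k + 1)) * (A k + A (k + 1)) := by
            refine mul_le_mul_of_nonneg_left ?_ (one_div_nonneg.2 (by positivity))
            nlinarith [hA₀ k, hA₀ (k + 1)]
        _ = c * (A k + A (k + 1)) / (m * (k + 1) * c) := by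
            field_simp
        _ ≤ (k + 1) * (A k + 3 * A (k + 1) + 2 * A (k + 2)) / (m * (k + 1) * c) := by
            gcongr
        _ = ε * (A k + 3 * A (k + 1) + 2 * A (k + 2)) := by
            rw [hε_def]
            field_simp
    linarith
  calc c ^ (-2 * ν) * besselSeries (-ν) c
      = ∑' k, c ^ (-2 * ν) * besselTerm (-ν) c k := tsum_mul_left.symm
    _ ≤ ∑' k, ((1 + ν + ε) * A k + (-ν + 3 * ε) * A (k + 1) + 2 * ε * A (k + 2)) :=
        Summable.tsum_le_tsum hterm ((summable_besselTerm (by linarith) c).mul_left _)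
          (((hA.mul_left _).add (hA₁.mul_left _)).add (hA₂.mul_left _))
    _ = (1 + ν + ε) * ∑' k, A k + (-ν + 3 * ε) * ∑' k, A (k + 1) +
          2 * ε * ∑' k, A (k + 2) := by
        rw [((hA.mul_left _).add (hA₁.mul_left _)).tsum_add (hA₂.mul_left _),
          (hA.mul_left _).tsum_add (hA₁.mul_left _), tsum_mul_left, tsum_mul_left, tsum_mul_left]
    _ ≤ (1 + ν + ε) * ∑' k, A k + (-ν + 3 * ε) * ∑' k, A k + 2 * ε * ∑' k, A k := by
        have h₁ := tsum_nat_add_le_tsum hA hA₀ 1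
        have h₂ := tsum_nat_add_le_tsum hA hA₀ 2
        exact add_le_add (add_le_add le_rfl (mul_le_mul_of_nonneg_left h₁ (by linarith)))
          (mul_le_mul_of_nonneg_left h₂ (by linarith))
    _ = (1 + 6 / m / c) * besselSeries ν c := by
        rw [besselSeries, hε_def]
        field_simp
        ring

lemma rpow_mul_besselSeries_neg_le (hν₁ : -1 < ν) (hν₂ : ν < 0) {c : ℝ} (hc : 0 < c) :
    c ^ (-2 * ν) * besselSeries (-ν) c ≤ besselSeries ν c := by
  obtain ⟨C, hC⟩ := exists_rpow_mul_besselSeries_neg_le hν₁ hν₂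
  suffices h : c ^ (-2 * ν) * besselSeries (-ν) c / besselSeries ν c ≤ 1 by
    rwa [div_le_one (besselSeries_pos hν₁ c)] at h
  have hlim : Tendsto (fun d : ℝ => 1 + C / d) atTop (𝓝 1) := by
    simpa using tendsto_const_nhds.add (tendsto_const_nhds.div_atTop (tendsto_id (α := ℝ)))
  refine ge_of_tendsto hlim ?_
  filter_upwards [eventually_ge_atTop c] with d hd
  have hd₀ : 0 < d := hc.trans_le hd
  refine (monotoneOn_besselRatio hν₁ hν₂ hc hd₀ hd).trans ?_
  rw [div_le_iff₀ (besselSeries_pos hν₁ d)]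
  exact hC d hd₀

end Asymptotics

lemma Fker_eq (a z : ℝ) :
    Fker a z = exp (-z / 2) * (besselSeries ((a - 1) / 2) (z / 4) +
      z / 4 * |z / 4| ^ (-a) * besselSeries (-((a - 1) / 2)) (z / 4)) :=
  rfl

lemma Fker_nonneg {a : ℝ} (ha₁ : -1 < a) (ha₂ : a < 1) (z : ℝ) : 0 ≤ Fker a z := by
  rw [Fker_eq]
  set ν := (a - 1) / 2 with hν
  have hν₁ : -1 < ν := by linarith
  have hν₂ : ν < 0 := by linarith
  refine mul_nonneg (exp_pos _).le ?_
  rcases le_or_gt 0 z with hz | hz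
  · exact add_nonneg (besselSeries_pos hν₁ _).le (mul_nonneg (mul_nonneg (by linarith)
      (rpow_nonneg (abs_nonneg _) _)) (besselSeries_pos (by linarith) _).le)
  · obtain ⟨c, rfl⟩ : ∃ c, z = -4 * c := ⟨-z / 4, by ring⟩
    have hc : 0 < c := by linarith
    have hpow : c * c ^ (-a) = c ^ (-2 * ν) := by
      rw [hν, show -2 * ((a - 1) / 2) = 1 + -a by ring, rpow_add hc, rpow_one]
    rw [show -4 * c / 4 = -c by ring, besselSeries_neg, besselSeries_neg, abs_neg, abs_of_pos hc,
      neg_mul, hpow]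
    linarith [rpow_mul_besselSeries_neg_le hν₁ hν₂ hc]

/-- The degenerate heat kernel is nonnegative: `ũ(x,y,t) ≥ 0` for all `x, y ∈ ℝ`, `t > 0`. -/
theorem utilde_nonneg (a : ℝ) (ha₁ : -1 < a) (ha₂ : a < 1) (x y t : ℝ) (ht : 0 < t) :
    0 ≤ utilde a x y t :=
  mul_nonneg (mul_nonneg (rpow_nonneg (by linarith) _) (exp_pos _).le) (Fker_nonneg ha₁ ha₂ _)
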